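/- arXiv:1807.00338 — 7 statements merged into one kernel-verified Lean document; each statement's English description precedes it below -/
import Mathlib

section
/- If P is a κ-closed partial order and D is a family of at most κ dense subsets of P, then there exists a filter Φ in P intersecting every member of D. -/
open Cardinal

universe u

/-- `P` is `κ`-closed: every decreasing sequence indexed by a well-ordered
type of cardinality `< κ` has a lower bound. -/
def KClosedOrder (P : Type u) [PartialOrder P] (κ : Cardinal.{u}) : Prop :=
  ∀ (ι : Type u) [LinearOrder ι] [WellFoundedLT ι], #ι < κ →
    ∀ p : ι → P, Antitone p → ∃ q : P, ∀ j : ι, q ≤ p j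

/-!
Enumerate the dense sets along the initial ordinal of `κ` and build a decreasing sequence by
transfinite recursion: at stage `i` the earlier terms form a decreasing sequence of length `< κ`,
so they have a lower bound, below which we pick a point of the `i`-th dense set.
The upward closure of the sequence is the required filter.
-/

open Set

theorem exists_dense_family_covering_of_mk_le {P : Type u} [Preorder P] {ι : Type u}
    (D : Set (Set P)) (hD : #D ≤ #ι) (hdense : ∀ d ∈ D, ∀ p : P, ∃ q ∈ d, q ≤ p) :
    ∃ e : ι → Set P, (∀ i, ∀ p : P, ∃ q ∈ e i, q ≤ p) ∧ ∀ d ∈ D, ∃ i, e i = d := by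
  classical
  obtain ⟨f⟩ := Cardinal.le_def _ _ |>.mp hD
  refine ⟨fun i => if h : ∃ d, f d = i then h.choose else univ, fun i p => ?_,
    fun d hd => ⟨f ⟨d, hd⟩, ?_⟩⟩
  · dsimp only
    split_ifs with h
    · exact hdense _ h.choose.2 p
    · exact ⟨p, trivial, le_rfl⟩
  · have h : ∃ d', f d' = f ⟨d, hd⟩ := ⟨_, rfl⟩
    simp only [dif_pos h, f.injective h.choose_spec]

namespace KClosedOrder

variable {P : Type u} [PartialOrder P] {κ : Cardinal.{u}}

theorem nonempty (hclosed : KClosedOrder P κ) (hκ : 0 < κ) : Nonempty P :=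
  let ⟨q, _⟩ := hclosed PEmpty (by simpa using hκ) PEmpty.elim fun a => a.elim
  ⟨q⟩

theorem exists_antitone_forall_mem (hclosed : KClosedOrder P κ) {ι : Type u} [LinearOrder ι]
    [WellFoundedLT ι] (hIio : ∀ i : ι, #(Iio i) < κ) (e : ι → Set P)
    (he : ∀ i, ∀ p : P, ∃ q ∈ e i, q ≤ p) :
    ∃ p : ι → P, Antitone p ∧ ∀ i, p i ∈ e i := by
  classical
  rcases isEmpty_or_nonempty ι with _ | ⟨⟨i₀⟩⟩
  · exact ⟨isEmptyElim, fun i => isEmptyElim i, isEmptyElim⟩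
  have : Nonempty P := hclosed.nonempty (zero_le.trans_lt (hIio i₀))
  -- By `κ`-closedness the fallback branch is never taken along the recursion.
  let F : ∀ i : ι, (∀ j < i, P) → P := fun i g =>
    (he i (if h : ∃ b, ∀ j (hj : j < i), b ≤ g j hj then h.choose
      else Classical.arbitrary P)).choose
  let p : ι → P := IsWellFounded.fix (· < ·) F
  have hp (i : ι) : p i = F i (fun j _ => p j) := IsWellFounded.fix_eq _ F i
  have hp_spec (i : ι) : p i ∈ e i ∧ ∀ j < i, p i ≤ p j := by
    induction i using WellFoundedLT.induction with
    | _ i IH =>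
    have hbound : ∃ b, ∀ j (hj : j < i), b ≤ p j := by
      have hanti : Antitone fun j : Iio i => p j :=
        antitone_iff_forall_lt.2 fun j k hjk => (IH k k.2).2 j hjk
      obtain ⟨b, hb⟩ := hclosed (Iio i) (hIio i) _ hanti
      exact ⟨b, fun j hj => hb ⟨j, hj⟩⟩
    have hpi := (he i hbound.choose).choose_spec
    rw [hp i]
    simp only [F, dif_pos hbound]
    exact ⟨hpi.1, fun j hj => hpi.2.trans (hbound.choose_spec j hj)⟩
  exact ⟨p, antitone_iff_forall_lt.2 fun j i hji => (hp_spec i).2 j hji, fun i => (hp_spec i).1⟩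

end KClosedOrder

theorem stmt_0_general {P : Type u} [PartialOrder P] (κ : Cardinal.{u})
    (hclosed : KClosedOrder P κ)
    (D : Set (Set P)) (hD : #D ≤ κ)
    (hdense : ∀ d ∈ D, ∀ p : P, ∃ q ∈ d, q ≤ p) :
    ∃ Φ : Set P,
      (∀ p ∈ Φ, ∀ q : P, p ≤ q → q ∈ Φ) ∧
      (∀ p ∈ Φ, ∀ q ∈ Φ, ∃ r ∈ Φ, r ≤ p ∧ r ≤ q) ∧
      ∀ d ∈ D, (Φ ∩ d).Nonempty := by
  obtain ⟨e, he_dense, he_cover⟩ :=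
    exists_dense_family_covering_of_mk_le (ι := κ.ord.ToType) D (by rwa [mk_ord_toType]) hdense
  obtain ⟨p, hp_anti, hp_mem⟩ :=
    hclosed.exists_antitone_forall_mem (fun i => by simpa using mk_Iio_lt i) e he_dense
  refine ⟨{x | ∃ i, p i ≤ x}, ?_, ?_, ?_⟩
  · rintro x ⟨i, hi⟩ y hxy
    exact ⟨i, hi.trans hxy⟩
  · rintro x ⟨i, hi⟩ y ⟨j, hj⟩
    exact ⟨p (max i j), ⟨_, le_rfl⟩, (hp_anti (le_max_left i j)).trans hi,
      (hp_anti (le_max_right i j)).trans hj⟩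
  · intro d hd
    obtain ⟨i, rfl⟩ := he_cover d hd
    exact ⟨p i, ⟨i, le_rfl⟩, hp_mem i⟩

theorem stmt_0 {P : Type u} [PartialOrder P] (κ : Cardinal.{u}) (hκ : ℵ₀ ≤ κ)
    (hclosed : KClosedOrder P κ)
    (D : Set (Set P)) (hD : #D ≤ κ)
    (hdense : ∀ d ∈ D, ∀ p : P, ∃ q ∈ d, q ≤ p) :
    ∃ Φ : Set P,
      (∀ p ∈ Φ, ∀ q : P, p ≤ q → q ∈ Φ) ∧
      (∀ p ∈ Φ, ∀ q ∈ Φ, ∃ r ∈ Φ, r ≤ p ∧ r ≤ q) ∧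
      ∀ d ∈ D, (Φ ∩ d).Nonempty :=
  stmt_0_general κ hclosed D hD hdense
end

section
/- Let X be a relational structure of infinite cardinality κ. X is not reversible if and only if there exists a κ-closed back-and-forth system Π of partial self-condensations of X containing a bad finite partial condensation, i.e., a finite partial condensation not extendable to any automorphism of X. -/
/-! A condensation `F` that is not an automorphism turns some non-tuple of a relation into a
tuple of it; all subsets of the graph of `F` form a trivially closed back-and-forth system, and
the restriction of `F` to that tuple is bad. Conversely, enumerate `X` in order type `κ.ord`.
Every proper initial segment has size `< κ`, so `κ`-closedness carries a transfinite
back-and-forth along the enumeration through limit stages; the union of the resulting chain is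
a condensation extending the bad map, hence not an automorphism. -/

open Cardinal

universe u v

/-- A relational language: a set of relation symbols with arities. -/
structure RelLang : Type 1 where
  I : Type
  arity : I → ℕ

/-- A structure for the relational language `L` with domain `X`. -/
structure RelStr (L : RelLang) (X : Type u) : Type u where
  rel : ∀ i : L.I, Set (Fin (L.arity i) → X)

variable {L : RelLang}

/-- `f ⊆ X × Y` is (the graph of) a partial condensation from `A` to `B`:
an injective partial function preserving all relations forward. -/
def IsPCond {X : Type u} {Y : Type v} (A : RelStr L X) (B : RelStr L Y)
    (f : Set (X × Y)) : Prop :=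
  (∀ p ∈ f, ∀ q ∈ f, p.1 = q.1 → p.2 = q.2) ∧
  (∀ p ∈ f, ∀ q ∈ f, p.2 = q.2 → p.1 = q.1) ∧
  (∀ i : L.I, ∀ xs : Fin (L.arity i) → X, ∀ ys : Fin (L.arity i) → Y,
    (∀ k, (xs k, ys k) ∈ f) → xs ∈ A.rel i → ys ∈ B.rel i)

/-- A back-and-forth system of partial condensations from `A` to `B`. -/
def IsBFS {X : Type u} {Y : Type v} (A : RelStr L X) (B : RelStr L Y)
    (S : Set (Set (X × Y))) : Prop :=
  S.Nonempty ∧ (∀ f ∈ S, IsPCond A B f) ∧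
  (∀ f ∈ S, ∀ x : X, ∃ g ∈ S, f ⊆ g ∧ ∃ y : Y, (x, y) ∈ g) ∧
  (∀ f ∈ S, ∀ y : Y, ∃ g ∈ S, f ⊆ g ∧ ∃ x : X, (x, y) ∈ g)

/-- A condensation: a bijective homomorphism from `A` onto `B`. -/
def IsCond {X : Type u} {Y : Type v} (A : RelStr L X) (B : RelStr L Y)
    (F : X → Y) : Prop :=
  Function.Bijective F ∧
  ∀ i : L.I, ∀ xs : Fin (L.arity i) → X, xs ∈ A.rel i → (fun k => F (xs k)) ∈ B.rel i

/-- The poset `(S, ⊇)` is `κ`-closed: every `⊆`-increasing chain indexed by a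
well-ordered type of cardinality `< κ` has an upper bound in `S`. -/
def KClosedSystem {α : Type u} (κ : Cardinal.{u}) (S : Set (Set α)) : Prop :=
  ∀ (ι : Type u) [LinearOrder ι] [WellFoundedLT ι], #ι < κ →
    ∀ c : ι → Set α, (∀ j, c j ∈ S) → (∀ j k : ι, j ≤ k → c j ⊆ c k) →
      ∃ g ∈ S, ∀ j, c j ⊆ g

/-- An automorphism of `A`: a bijection preserving and reflecting all relations. -/
def IsAuto {X : Type u} (A : RelStr L X) (F : X → X) : Prop :=
  Function.Bijective F ∧
  ∀ i : L.I, ∀ xs : Fin (L.arity i) → X, xs ∈ A.rel i ↔ (fun k => F (xs k)) ∈ A.rel i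

section General

variable {X Y : Type u} {A : RelStr L X} {B : RelStr L Y}

theorem IsPCond.iUnion {ι : Type*} [Nonempty ι] {c : ι → Set (X × Y)}
    (hc : ∀ j, IsPCond A B (c j)) (hdir : Directed (· ⊆ ·) c) :
    IsPCond A B (⋃ j, c j) := by
  have common : ∀ {p q}, p ∈ ⋃ j, c j → q ∈ ⋃ j, c j → ∃ j, p ∈ c j ∧ q ∈ c j := by
    simp only [Set.mem_iUnion]
    rintro p q ⟨j, hp⟩ ⟨k, hq⟩
    obtain ⟨m, hjm, hkm⟩ := hdir j k
    exact ⟨m, hjm hp, hkm hq⟩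
  refine ⟨fun p hp q hq => ?_, fun p hp q hq => ?_, fun i xs ys hxy => ?_⟩
  · obtain ⟨j, hpj, hqj⟩ := common hp hq
    exact (hc j).1 p hpj q hqj
  · obtain ⟨j, hpj, hqj⟩ := common hp hq
    exact (hc j).2.1 p hpj q hqj
  · classical
    choose idx hidx using fun k => Set.mem_iUnion.mp (hxy k)
    obtain ⟨m, hm⟩ := hdir.finset_le (Finset.univ.image idx)
    exact (hc m).2.2 i xs ys fun k =>
      hm _ (Finset.mem_image_of_mem idx (Finset.mem_univ k)) (hidx k)

theorem IsPCond.exists_isCond {f : Set (X × Y)} (hf : IsPCond A B f)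
    (hdom : ∀ x, ∃ y, (x, y) ∈ f) (hran : ∀ y, ∃ x, (x, y) ∈ f) :
    ∃ F : X → Y, IsCond A B F ∧ ∀ p ∈ f, F p.1 = p.2 := by
  choose F hF using hdom
  have graph : ∀ p ∈ f, F p.1 = p.2 := fun p hp => hf.1 (p.1, F p.1) (hF p.1) p hp rfl
  refine ⟨F, ⟨⟨fun x x' hxx' => ?_, fun y => ?_⟩, fun i xs hxs => ?_⟩, graph⟩
  · exact hf.2.1 (x, F x) (hF x) (x', F x') (hF x') hxx'
  · obtain ⟨x, hx⟩ := hran y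
    exact ⟨x, graph _ hx⟩
  · exact hf.2.2 i xs _ (fun k => hF (xs k)) hxs

theorem IsCond.isPCond_of_subset_graph {F : X → Y} (hF : IsCond A B F) {f : Set (X × Y)}
    (hf : f ⊆ {p | F p.1 = p.2}) : IsPCond A B f := by
  refine ⟨fun p hp q hq h => ?_, fun p hp q hq h => ?_, fun i xs ys hxy hxs => ?_⟩
  · rw [← hf hp, ← hf hq, h]
  · exact hF.1.1 ((hf hp).trans (h.trans (hf hq).symm))
  · convert hF.2 i xs hxs
    exact (hf (hxy _)).symm

theorem IsCond.isBFS_powerset_graph {F : X → Y} (hF : IsCond A B F) :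
    IsBFS A B (𝒫 {p | F p.1 = p.2}) := by
  refine ⟨⟨∅, Set.empty_subset _⟩, fun f hf => hF.isPCond_of_subset_graph hf,
    fun f hf x => ?_, fun f hf y => ?_⟩
  · exact ⟨insert (x, F x) f, Set.insert_subset rfl hf, Set.subset_insert _ _, F x,
      Set.mem_insert _ _⟩
  · obtain ⟨x, rfl⟩ := hF.1.2 y
    exact ⟨insert (x, F x) f, Set.insert_subset rfl hf, Set.subset_insert _ _, x,
      Set.mem_insert _ _⟩

end General

theorem kClosedSystem_powerset {α : Type u} (κ : Cardinal.{u}) (s : Set α) :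
    KClosedSystem κ (𝒫 s) :=
  fun _ _ _ _ _ hc _ => ⟨s, Set.mem_powerset subset_rfl, hc⟩

theorem KClosedSystem.exists_upper_bound {α : Type u} {κ : Cardinal.{u}} {S : Set (Set α)}
    (hk : KClosedSystem κ S) {ι : Type u} [LinearOrder ι] [WellFoundedLT ι] (hι : #ι < κ)
    {c : ι → Set α} (hc : ∀ j, c j ∈ S) (hmono : Monotone c)
    {f : Set α} (hf : f ∈ S) (hfc : ∀ j, f ⊆ c j) :
    ∃ g ∈ S, f ⊆ g ∧ ∀ j, c j ⊆ g := by
  cases isEmpty_or_nonempty ι with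
  | inl => exact ⟨f, hf, subset_rfl, isEmptyElim⟩
  | inr h =>
    obtain ⟨g, hgS, hcg⟩ := hk ι hι c hc fun j k hjk => hmono hjk
    exact ⟨g, hgS, (hfc h.some).trans (hcg _), hcg⟩

section Construction

variable {X Y : Type u} {A : RelStr L X} {B : RelStr L Y} {κ : Cardinal.{u}}
  {S : Set (Set (X × Y))} {ι : Type u} [LinearOrder ι] [WellFoundedLT ι]

theorem IsBFS.exists_extension_covering (hS : IsBFS A B S) {f : Set (X × Y)} (hf : f ∈ S)
    (x : X) (y : Y) :
    ∃ g ∈ S, f ⊆ g ∧ (∃ y', (x, y') ∈ g) ∧ ∃ x', (x', y) ∈ g := by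
  obtain ⟨g₁, hg₁, hfg₁, y', hxy'⟩ := hS.2.2.1 f hf x
  obtain ⟨g₂, hg₂, hg₁g₂, x', hx'y⟩ := hS.2.2.2 g₁ hg₁ y
  exact ⟨g₂, hg₂, hfg₁.trans hg₁g₂, ⟨y', hg₁g₂ hxy'⟩, x', hx'y⟩

theorem IsBFS.exists_next_stage (hS : IsBFS A B S) (hk : KClosedSystem κ S) (hι : #ι < κ)
    {c : ι → Set (X × Y)} (hc : ∀ j, c j ∈ S) (hmono : Monotone c)
    {f : Set (X × Y)} (hf : f ∈ S) (hfc : ∀ j, f ⊆ c j) (x : X) (y : Y) :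
    ∃ s ∈ S, f ⊆ s ∧ (∀ j, c j ⊆ s) ∧ (∃ y', (x, y') ∈ s) ∧ ∃ x', (x', y) ∈ s := by
  obtain ⟨g, hgS, hfg, hcg⟩ := hk.exists_upper_bound hι hc hmono hf hfc
  obtain ⟨s, hsS, hgs, hcover⟩ := hS.exists_extension_covering hgS x y
  exact ⟨s, hsS, hfg.trans hgs, fun j => (hcg j).trans hgs, hcover⟩

theorem IsBFS.exists_monotone_covering (hS : IsBFS A B S) (hk : KClosedSystem κ S)
    (hι : ∀ i : ι, #(Set.Iio i) < κ) (a : ι → X) (b : ι → Y)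
    {f : Set (X × Y)} (hf : f ∈ S) :
    ∃ g : ι → Set (X × Y), Monotone g ∧ ∀ i, g i ∈ S ∧ f ⊆ g i ∧
      (∃ y, (a i, y) ∈ g i) ∧ ∃ x, (x, b i) ∈ g i := by
  -- the recursion step may only be applied to stages that already form a chain above `f`
  have step : ∀ i (c : ∀ j, j < i → Set (X × Y)), ∃ s,
      (∀ j hj, c j hj ∈ S ∧ f ⊆ c j hj) → (∀ j hj k hk, j ≤ k → c j hj ⊆ c k hk) →
        s ∈ S ∧ f ⊆ s ∧ (∀ j hj, c j hj ⊆ s) ∧ (∃ y, (a i, y) ∈ s) ∧ ∃ x, (x, b i) ∈ s := by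
    intro i c
    by_cases hc : (∀ j hj, c j hj ∈ S ∧ f ⊆ c j hj) ∧
        ∀ j hj k hk, j ≤ k → c j hj ⊆ c k hk
    · obtain ⟨s, hsS, hfs, hcs, hcover⟩ := hS.exists_next_stage hk (hι i)
        (c := fun j => c j.1 j.2) (fun j => (hc.1 j.1 j.2).1)
        (fun j k hjk => hc.2 j.1 j.2 k.1 k.2 hjk) hf (fun j => (hc.1 j.1 j.2).2) (a i) (b i)
      exact ⟨s, fun _ _ => ⟨hsS, hfs, fun j hj => hcs ⟨j, hj⟩, hcover⟩⟩
    · exact ⟨∅, fun h₁ h₂ => absurd ⟨h₁, h₂⟩ hc⟩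
  choose next hnext using step
  let g : ι → Set (X × Y) := WellFoundedLT.fix next
  have hg : ∀ i, g i ∈ S ∧ f ⊆ g i ∧ (∀ j < i, g j ⊆ g i) ∧
      (∃ y, (a i, y) ∈ g i) ∧ ∃ x, (x, b i) ∈ g i := by
    intro i
    induction i using WellFoundedLT.induction with
    | ind i ih =>
      rw [show g i = next i fun j _ => g j from WellFoundedLT.fix_eq next i]
      refine hnext i _ (fun j hj => ⟨(ih j hj).1, (ih j hj).2.1⟩) fun j _ k hk hjk => ?_
      rcases hjk.lt_or_eq with hjk | rfl
      exacts [(ih k hk).2.2.1 j hjk, subset_rfl]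
  exact ⟨g, monotone_iff_forall_lt.mpr fun j i hji => (hg i).2.2.1 j hji,
    fun i => ⟨(hg i).1, (hg i).2.1, (hg i).2.2.2⟩⟩

theorem IsBFS.exists_isCond_extending [Nonempty ι] (hS : IsBFS A B S)
    (hk : KClosedSystem κ S)
    (hι : ∀ i : ι, #(Set.Iio i) < κ) {a : ι → X} {b : ι → Y}
    (ha : Function.Surjective a) (hb : Function.Surjective b) {f : Set (X × Y)} (hf : f ∈ S) :
    ∃ F : X → Y, IsCond A B F ∧ ∀ p ∈ f, F p.1 = p.2 := by
  obtain ⟨g, hmono, hg⟩ := hS.exists_monotone_covering hk hι a b hf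
  have hU : IsPCond A B (⋃ i, g i) :=
    IsPCond.iUnion (fun i => hS.2.1 _ (hg i).1) hmono.directed_le
  obtain ⟨F, hF, hFU⟩ := hU.exists_isCond
    (fun x => by
      obtain ⟨i, rfl⟩ := ha x
      obtain ⟨y, hy⟩ := (hg i).2.2.1
      exact ⟨y, Set.mem_iUnion_of_mem i hy⟩)
    (fun y => by
      obtain ⟨i, rfl⟩ := hb y
      obtain ⟨x, hx⟩ := (hg i).2.2.2
      exact ⟨x, Set.mem_iUnion_of_mem i hx⟩)
  have hfU : f ⊆ ⋃ i, g i := ((hg (Classical.arbitrary ι)).2.1).trans (Set.subset_iUnion g _)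
  exact ⟨F, hF, fun p hp => hFU p (hfU hp)⟩

end Construction

theorem IsCond.exists_notMem_of_not_isAuto {X : Type u} {A : RelStr L X} {F : X → X}
    (hF : IsCond A A F) (hnF : ¬ IsAuto A F) :
    ∃ i xs, xs ∉ A.rel i ∧ (fun k => F (xs k)) ∈ A.rel i := by
  by_contra! h
  exact hnF ⟨hF.1, fun i xs => ⟨hF.2 i xs, fun hFxs => by_contra fun hxs => h i xs hxs hFxs⟩⟩

theorem IsCond.exists_bad_finite_subset_graph {X : Type u} {A : RelStr L X} {F : X → X}
    (hF : IsCond A A F) (hnF : ¬ IsAuto A F) :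
    ∃ f ⊆ {p : X × X | F p.1 = p.2}, f.Finite ∧
      ¬ ∃ G : X → X, IsAuto A G ∧ ∀ p ∈ f, G p.1 = p.2 := by
  obtain ⟨i, xs, hxs, hFxs⟩ := hF.exists_notMem_of_not_isAuto hnF
  refine ⟨Set.range fun k => (xs k, F (xs k)), Set.range_subset_iff.mpr fun k => rfl,
    Set.finite_range _, ?_⟩
  rintro ⟨G, hG, hGF⟩
  have hGxs : (fun k => G (xs k)) = fun k => F (xs k) := funext fun k => hGF _ ⟨k, rfl⟩
  exact hxs ((hG.2 i xs).mpr (hGxs ▸ hFxs))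

theorem stmt_4 {X : Type u} (A : RelStr L X) (κ : Cardinal.{u})
    (hκ : ℵ₀ ≤ κ) (hX : #X = κ) :
    (¬ ∀ F : X → X, IsCond A A F → IsAuto A F) ↔
      ∃ S : Set (Set (X × X)), IsBFS A A S ∧ KClosedSystem κ S ∧
        ∃ f ∈ S, f.Finite ∧
          ¬ ∃ F : X → X, IsAuto A F ∧ ∀ p ∈ f, F p.1 = p.2 := by
  constructor
  · intro h
    simp only [not_forall, exists_prop] at h
    obtain ⟨F, hF, hnF⟩ := h
    obtain ⟨f, hfF, hfin, hbad⟩ := hF.exists_bad_finite_subset_graph hnF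
    exact ⟨_, hF.isBFS_powerset_graph, kClosedSystem_powerset κ _, f, hfF, hfin, hbad⟩
  · rintro ⟨S, hS, hk, f, hfS, -, hbad⟩ hrev
    obtain ⟨e⟩ : Nonempty (κ.ord.ToType ≃ X) := Cardinal.eq.mp (by rw [mk_ord_toType, hX])
    have : Nonempty κ.ord.ToType := Ordinal.nonempty_toType_iff.mpr
      (Cardinal.ord_eq_zero.not.mpr (aleph0_pos.trans_le hκ).ne')
    have hι : ∀ i : κ.ord.ToType, #(Set.Iio i) < κ := fun i => by simpa using mk_Iio_lt i
    obtain ⟨F, hF, hfF⟩ := hS.exists_isCond_extending hk hι e.surjective e.surjective hfS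
    exact hbad ⟨F, hrev F hF, hfF⟩
end

section
/- Let X be a countable relational structure. X is not reversible if and only if there exists a back-and-forth system of partial self-condensations of X containing a finite partial condensation that does not extend to any automorphism of X. -/
/-!
A condensation `F` that is not an automorphism maps some tuple outside a relation into it; the
restriction of `F` to that tuple is a finite partial condensation with no automorphic extension,
and together with the graph of `F` it forms a back-and-forth system. Conversely, for countable
`X` the back-and-forth method (a sequence meeting the countably many cofinal sets "`x` is in the
domain" and "`y` is in the range") extends any member of a back-and-forth system to a
condensation, which is not an automorphism when the member has no automorphic extension.
-/

open Cardinal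

universe u v

variable {L : RelLang}

namespace IsPCond

variable {X : Type u} {Y : Type v} {A : RelStr L X} {B : RelStr L Y}

theorem mono {f g : Set (X × Y)} (hg : IsPCond A B g) (hfg : f ⊆ g) : IsPCond A B f :=
  ⟨fun p hp q hq => hg.1 p (hfg hp) q (hfg hq),
   fun p hp q hq => hg.2.1 p (hfg hp) q (hfg hq),
   fun i xs ys h => hg.2.2 i xs ys fun k => hfg (h k)⟩

theorem graph {F : X → Y} (hinj : Function.Injective F)
    (hhom : ∀ i xs, xs ∈ A.rel i → (fun k => F (xs k)) ∈ B.rel i) :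
    IsPCond A B {p | F p.1 = p.2} := by
  refine ⟨?_, ?_, ?_⟩
  · rintro p (hp : F p.1 = p.2) q (hq : F q.1 = q.2) h
    rw [← hp, ← hq, h]
  · rintro p (hp : F p.1 = p.2) q (hq : F q.1 = q.2) h
    exact hinj (hp.trans (h.trans hq.symm))
  · intro i xs ys hxy hxs
    obtain rfl : (fun k => F (xs k)) = ys := funext hxy
    exact hhom i xs hxs

theorem iUnion_s5 {ι : Type*} [Nonempty ι] {c : ι → Set (X × Y)} (hc : ∀ j, IsPCond A B (c j))
    (hdir : Directed (· ⊆ ·) c) : IsPCond A B (⋃ j, c j) := by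
  have common : ∀ {p q}, p ∈ ⋃ j, c j → q ∈ ⋃ j, c j → ∃ j, p ∈ c j ∧ q ∈ c j := by
    intro p q hp hq
    obtain ⟨j, hj⟩ := Set.mem_iUnion.1 hp
    obtain ⟨j', hj'⟩ := Set.mem_iUnion.1 hq
    obtain ⟨l, hjl, hj'l⟩ := hdir j j'
    exact ⟨l, hjl hj, hj'l hj'⟩
  refine ⟨?_, ?_, ?_⟩
  · intro p hp q hq
    obtain ⟨j, hpj, hqj⟩ := common hp hq
    exact (hc j).1 p hpj q hqj
  · intro p hp q hq
    obtain ⟨j, hpj, hqj⟩ := common hp hq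
    exact (hc j).2.1 p hpj q hqj
  · intro i xs ys hxy hxs
    choose m hm using fun k => Set.mem_iUnion.1 (hxy k)
    obtain ⟨l, hl⟩ := hdir.finite_le m
    exact (hc l).2.2 i xs ys (fun k => hl k (hm k)) hxs

theorem exists_isCond_s5 {f : Set (X × Y)} (hf : IsPCond A B f) (htot : ∀ x, ∃ y, (x, y) ∈ f)
    (hsurj : ∀ y, ∃ x, (x, y) ∈ f) : ∃ F : X → Y, IsCond A B F ∧ ∀ p ∈ f, F p.1 = p.2 := by
  choose F hF using htot
  have hFf : ∀ p ∈ f, F p.1 = p.2 := fun p hp => hf.1 _ (hF p.1) p hp rfl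
  refine ⟨F, ⟨⟨fun x x' h => hf.2.1 _ (hF x) _ (hF x') h, fun y => ?_⟩,
    fun i xs hxs => hf.2.2 i xs _ (fun k => hF (xs k)) hxs⟩, hFf⟩
  obtain ⟨x, hx⟩ := hsurj y
  exact ⟨x, hFf _ hx⟩

end IsPCond

namespace IsBFS

variable {X : Type u} {Y : Type v} {A : RelStr L X} {B : RelStr L Y}

theorem pair_graph {F : X → Y} (hF : IsCond A B F) {f : Set (X × Y)}
    (hf : ∀ p ∈ f, F p.1 = p.2) : IsBFS A B {f, {p | F p.1 = p.2}} := by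
  have hgraph : IsPCond A B {p | F p.1 = p.2} := IsPCond.graph hF.1.1 hF.2
  have hsub : ∀ g ∈ ({f, {p | F p.1 = p.2}} : Set (Set (X × Y))), g ⊆ {p | F p.1 = p.2} := by
    rintro g (rfl | rfl)
    exacts [hf, subset_rfl]
  refine ⟨⟨f, .inl rfl⟩, fun g hg => hgraph.mono (hsub g hg), fun g hg x => ?_, fun g hg y => ?_⟩
  · exact ⟨_, .inr rfl, hsub g hg, F x, rfl⟩
  · obtain ⟨x, rfl⟩ := hF.1.2 y
    exact ⟨_, .inr rfl, hsub g hg, x, rfl⟩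

theorem exists_isCond_extending_s5 [Countable X] [Countable Y] {S : Set (Set (X × Y))}
    (hS : IsBFS A B S) {f : Set (X × Y)} (hf : f ∈ S) :
    ∃ F : X → Y, IsCond A B F ∧ ∀ p ∈ f, F p.1 = p.2 := by
  obtain ⟨-, hpc, hforth, hback⟩ := hS
  have : Encodable (X ⊕ Y) := Encodable.ofCountable _
  let D : X ⊕ Y → Order.Cofinal S
    | .inl x => ⟨{g | ∃ y, (x, y) ∈ g.1}, fun g => by
        obtain ⟨g', hg', hgg', hx⟩ := hforth g.1 g.2 x
        exact ⟨⟨g', hg'⟩, hx, hgg'⟩⟩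
    | .inr y => ⟨{g | ∃ x, (x, y) ∈ g.1}, fun g => by
        obtain ⟨g', hg', hgg', hy⟩ := hback g.1 g.2 y
        exact ⟨⟨g', hg'⟩, hy, hgg'⟩⟩
  let seq := Order.sequenceOfCofinals (⟨f, hf⟩ : S) D
  have hmem (n : ℕ) {p : X × Y} (hp : p ∈ (seq n).1) : p ∈ ⋃ n, (seq n).1 :=
    Set.mem_iUnion.2 ⟨n, hp⟩
  have hU : IsPCond A B (⋃ n, (seq n).1) :=
    IsPCond.iUnion_s5 (fun n => hpc _ (seq n).2)
      ((Subtype.mono_coe _).comp (Order.sequenceOfCofinals.monotone _ D)).directed_le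
  obtain ⟨F, hF, hFU⟩ := hU.exists_isCond_s5
    (fun x => (Order.sequenceOfCofinals.encode_mem _ D (.inl x)).imp fun _ => hmem _)
    (fun y => (Order.sequenceOfCofinals.encode_mem _ D (.inr y)).imp fun _ => hmem _)
  exact ⟨F, hF, fun p hp => hFU p (hmem 0 hp)⟩

end IsBFS

theorem IsCond.exists_rel_not_reflected {X : Type u} {A : RelStr L X} {F : X → X}
    (hF : IsCond A A F) (hnauto : ¬ IsAuto A F) :
    ∃ i xs, xs ∉ A.rel i ∧ (fun k => F (xs k)) ∈ A.rel i := by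
  by_contra! h
  exact hnauto ⟨hF.1, fun i xs => ⟨hF.2 i xs, fun hFxs => by_contra fun hxs => h i xs hxs hFxs⟩⟩

theorem stmt_5 {X : Type u} [Countable X] (A : RelStr L X) :
    (¬ ∀ F : X → X, IsCond A A F → IsAuto A F) ↔
      ∃ S : Set (Set (X × X)), IsBFS A A S ∧
        ∃ f ∈ S, f.Finite ∧
          ¬ ∃ F : X → X, IsAuto A F ∧ ∀ p ∈ f, F p.1 = p.2 := by
  constructor
  · intro h
    push Not at h
    obtain ⟨F, hF, hnauto⟩ := h
    obtain ⟨i, xs, hxs, hFxs⟩ := hF.exists_rel_not_reflected hnauto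
    let f := Set.range fun k => (xs k, F (xs k))
    refine ⟨_, IsBFS.pair_graph hF (f := f) (by rintro _ ⟨k, rfl⟩; rfl), f, .inl rfl,
      Set.finite_range _, ?_⟩
    rintro ⟨G, hG, hGf⟩
    have hGF : (fun k => G (xs k)) = fun k => F (xs k) := funext fun k => hGf _ ⟨k, rfl⟩
    exact hxs ((hG.2 i xs).2 (hGF ▸ hFxs))
  · rintro ⟨S, hS, f, hfS, -, hnext⟩ h
    obtain ⟨F, hF, hFf⟩ := hS.exists_isCond_extending_s5 hfS
    exact hnext ⟨F, h F hF, hFf⟩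
end

section
/- Let P = ⟨P, <⟩ be a strict partial order of infinite size κ such that (u1) for all nonempty sets L, G of size < κ with L < G there is x with L < x < G. Then for all nonempty L, G of size < κ with L < G, the set {x ∈ P : L < x < G} has size κ. -/
/-! If the interval `S` between `L` and `G` had fewer than `κ` points, then `L ∪ S` would still be
a small nonempty set below `G`, so (u1) would give a point above `L ∪ S` and below `G`. That point
lies in `S` and hence above itself. -/

open Cardinal Set

universe u

section StrictBetween

variable {P : Type*} [Preorder P]

def strictBetween (L G : Set P) : Set P :=
  {x | (∀ a ∈ L, a < x) ∧ ∀ b ∈ G, x < b}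

theorem strictBetween_union_self_eq_empty (L G : Set P) :
    strictBetween (L ∪ strictBetween L G) G = ∅ :=
  eq_empty_of_forall_notMem fun x hx =>
    lt_irrefl x (hx.1 x (Or.inr ⟨fun a ha => hx.1 a (Or.inl ha), hx.2⟩))

theorem union_strictBetween_lt {L G : Set P} (hLG : ∀ a ∈ L, ∀ b ∈ G, a < b) :
    ∀ a ∈ L ∪ strictBetween L G, ∀ b ∈ G, a < b := by
  rintro a (ha | ha) b hb
  · exact hLG a ha b hb
  · exact ha.2 b hb

end StrictBetween

theorem stmt_6 {P : Type u} [PartialOrder P] (κ : Cardinal.{u})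
    (hκ : ℵ₀ ≤ κ) (hP : #P = κ)
    (u1 : ∀ L G : Set P, L.Nonempty → G.Nonempty → #L < κ → #G < κ →
      (∀ a ∈ L, ∀ b ∈ G, a < b) →
      ∃ x : P, (∀ a ∈ L, a < x) ∧ ∀ b ∈ G, x < b) :
    ∀ L G : Set P, L.Nonempty → G.Nonempty → #L < κ → #G < κ →
      (∀ a ∈ L, ∀ b ∈ G, a < b) →
      #{x : P | (∀ a ∈ L, a < x) ∧ ∀ b ∈ G, x < b} = κ := by
  intro L G hL hG hLκ hGκ hLG
  have hle : #(strictBetween L G) ≤ κ := hP ▸ mk_set_le _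
  refine hle.eq_of_not_lt fun hlt => ?_
  have hsmall : #(L ∪ strictBetween L G : Set P) < κ :=
    (mk_union_le _ _).trans_lt (add_lt_of_lt hκ hLκ hlt)
  obtain ⟨x, hx⟩ := u1 (L ∪ strictBetween L G) G (hL.mono subset_union_left) hG hsmall hGκ
    (union_strictBetween_lt hLG)
  exact (strictBetween_union_self_eq_empty L G).subset hx
end

section
/- Let P = ⟨P, <⟩ be a strict partial order of regular infinite cardinality κ satisfying (u1) and (u2). Then P is not reversible: there exists a bijective homomorphism F : P → P that is not an automorphism. -/
/-!
Fix `p`, an element `x < p`, and an element `b` incomparable to both `x` and `p`, and start from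
the partial map `p ↦ x`, `b ↦ p`: it is strictly monotone and injective, but `F p < F b` while
`p` and `b` are incomparable. A back-and-forth construction of length `κ` extends it to a
bijective strict homomorphism `F : P → P`. At each stage fewer than `κ` pairs have been fixed
(regularity of `κ`). Going forth, the candidate images of a new point form a set of size `κ` by
(u1) and (u2), so one avoids the current range; going back, a new preimage is chosen incomparable
to the whole current domain, so adding it creates no order constraints at all.
-/

open Cardinal Set

universe u

/-- `p` and `q` are incomparable. -/
def Incomp {P : Type u} [PartialOrder P] (p q : P) : Prop := ¬ p < q ∧ ¬ q < p

theorem Cardinal.mk_insert_lt {γ : Type u} {κ : Cardinal.{u}} (hκ : ℵ₀ ≤ κ) {s : Set γ}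
    (hs : #s < κ) (a : γ) : #(insert a s : Set γ) < κ :=
  mk_insert_le.trans_lt (add_lt_of_lt hκ hs (one_lt_aleph0.trans_le hκ))

section CumulativeIterate

variable {ι γ : Type*} [LinearOrder ι] [WellFoundedLT ι]

noncomputable def cumulativeIterate (step : ι → Set γ → Set γ) (S₀ : Set γ) : ι → Set γ :=
  wellFounded_lt.fix fun i T => step i (⋃₀ insert S₀ (range fun j : Iio i => T j j.2))

variable {step : ι → Set γ → Set γ} {S₀ : Set γ}

theorem cumulativeIterate_eq (i : ι) :
    cumulativeIterate step S₀ i = step i (⋃₀ insert S₀ (cumulativeIterate step S₀ '' Iio i)) := by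
  rw [cumulativeIterate, WellFounded.fix_eq, image_eq_range]

variable (hstep : ∀ i S, S ⊆ step i S)
include hstep

theorem subset_cumulativeIterate (i : ι) : S₀ ⊆ cumulativeIterate step S₀ i := by
  rw [cumulativeIterate_eq]
  exact (subset_sUnion_of_mem (mem_insert _ _)).trans (hstep _ _)

theorem monotone_cumulativeIterate : Monotone (cumulativeIterate step S₀) := by
  intro j i hji
  rcases hji.eq_or_lt with rfl | hji
  · rfl
  · rw [cumulativeIterate_eq (S₀ := S₀) i]
    have hj : cumulativeIterate step S₀ j ∈ cumulativeIterate step S₀ '' Iio i :=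
      mem_image_of_mem _ hji
    exact (subset_sUnion_of_mem (mem_insert_of_mem _ hj)).trans (hstep _ _)

theorem directedOn_insert_image_cumulativeIterate (s : Set ι) :
    DirectedOn (· ⊆ ·) (insert S₀ (cumulativeIterate step S₀ '' s)) := by
  refine IsChain.directedOn (IsChain.insert ?_ ?_)
  · exact ((monotone_cumulativeIterate hstep).isChain_range).mono (image_subset_range _ _)
  · rintro _ ⟨i, -, rfl⟩ -
    exact Or.inl (subset_cumulativeIterate hstep i)

end CumulativeIterate

theorem Cardinal.IsRegular.exists_pairwise_forall_of_extend {γ X : Type u} {κ : Cardinal.{u}}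
    (hκ : κ.IsRegular) (hX : #X = κ) {r : γ → γ → Prop} {Q : X → Set γ → Prop}
    (hQ : ∀ x, Monotone (Q x))
    (extend : ∀ S : Set γ, S.Pairwise r → #S < κ → ∀ x,
      ∃ T, S ⊆ T ∧ T.Pairwise r ∧ #T < κ ∧ Q x T)
    {S₀ : Set γ} (h₀ : S₀.Pairwise r) (hS₀ : #S₀ < κ) :
    ∃ S, S₀ ⊆ S ∧ S.Pairwise r ∧ ∀ x, Q x S := by
  classical
  obtain ⟨e⟩ : Nonempty (κ.ord.ToType ≃ X) := Cardinal.eq.1 (by rw [mk_ord_toType, hX])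
  let step (i : κ.ord.ToType) (S : Set γ) : Set γ :=
    if h : S.Pairwise r ∧ #S < κ then (extend S h.1 h.2 (e i)).choose else S
  have step_spec (i : κ.ord.ToType) {S : Set γ} (h : S.Pairwise r ∧ #S < κ) :
      S ⊆ step i S ∧ (step i S).Pairwise r ∧ #(step i S) < κ ∧ Q (e i) (step i S) := by
    simpa only [step, dif_pos h] using (extend S h.1 h.2 (e i)).choose_spec
  have hstep (i : κ.ord.ToType) (S : Set γ) : S ⊆ step i S := by
    by_cases h : S.Pairwise r ∧ #S < κ
    · exact (step_spec i h).1
    · simp only [step, dif_neg h, subset_rfl]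
  set T := cumulativeIterate step S₀
  have hT (i : κ.ord.ToType) : (T i).Pairwise r ∧ #(T i) < κ ∧ Q (e i) (T i) := by
    induction i using WellFoundedLT.induction with
    | _ i IH =>
    rw [show T i = _ from cumulativeIterate_eq i]
    refine (step_spec i ⟨?_, ?_⟩).2
    · refine (pairwise_sUnion (directedOn_insert_image_cumulativeIterate hstep _)).2 ?_
      rintro _ (rfl | ⟨j, hj, rfl⟩)
      exacts [h₀, (IH j hj).1]
    · have hIio : #(Iio i) < κ := by simpa using mk_Iio_lt i
      have hstages := mk_insert_lt hκ.aleph0_le ((mk_image_le (f := T)).trans_lt hIio) S₀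
      rw [sUnion_eq_biUnion, card_biUnion_lt_iff_forall_of_isRegular hκ hstages]
      rintro _ (rfl | ⟨j, hj, rfl⟩)
      exacts [hS₀, (IH j hj).2.1]
  have hdir := directedOn_insert_image_cumulativeIterate hstep (S₀ := S₀) Set.univ
  refine ⟨⋃₀ insert S₀ (T '' Set.univ), subset_sUnion_of_mem (mem_insert _ _), ?_, fun x => ?_⟩
  · refine (pairwise_sUnion hdir).2 ?_
    rintro _ (rfl | ⟨i, -, rfl⟩)
    exacts [h₀, (hT i).1]
  · have hx : T (e.symm x) ∈ T '' Set.univ := mem_image_of_mem T (mem_univ _)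
    refine hQ x (subset_sUnion_of_mem (mem_insert_of_mem _ hx)) ?_
    simpa using (hT (e.symm x)).2.2

/-- Condition (u1). -/
def SmallInterpolation (κ : Cardinal.{u}) (P : Type u) [Preorder P] : Prop :=
  ∀ L G : Set P, L.Nonempty → G.Nonempty → #L < κ → #G < κ →
    (∀ a ∈ L, ∀ b ∈ G, a < b) → ∃ x : P, (∀ a ∈ L, a < x) ∧ ∀ b ∈ G, x < b

/-- Condition (u2). -/
def SmallBoundsAndIncomparable (κ : Cardinal.{u}) (P : Type u) [PartialOrder P] : Prop :=
  ∀ K : Set P, K.Nonempty → #K < κ →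
    ∃ x y z : P, (∀ k ∈ K, x < k) ∧ (∀ k ∈ K, k < y) ∧ ∀ k ∈ K, Incomp z k

section Between

variable {κ : Cardinal.{u}} {β : Type u} [PartialOrder β]

theorem exists_between_of_small (u1 : SmallInterpolation κ β)
    (u2 : SmallBoundsAndIncomparable κ β) {L G : Set β} (hne : (L ∪ G).Nonempty)
    (hL : #L < κ) (hG : #G < κ) (hLG : ∀ a ∈ L, ∀ b ∈ G, a < b) :
    ∃ x, (∀ a ∈ L, a < x) ∧ ∀ b ∈ G, x < b := by
  rcases L.eq_empty_or_nonempty with rfl | hLne <;> rcases G.eq_empty_or_nonempty with rfl | hGne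
  · simp at hne
  · obtain ⟨x, -, -, hx, -, -⟩ := u2 G hGne hG
    exact ⟨x, by simp, hx⟩
  · obtain ⟨-, y, -, -, hy, -⟩ := u2 L hLne hL
    exact ⟨y, hy, by simp⟩
  · exact u1 L G hLne hGne hL hG hLG

theorem le_mk_setOf_between (hκ : ℵ₀ ≤ κ) (hβ : κ ≤ #β) (u1 : SmallInterpolation κ β)
    (u2 : SmallBoundsAndIncomparable κ β) {L G : Set β} (hL : #L < κ) (hG : #G < κ)
    (hLG : ∀ a ∈ L, ∀ b ∈ G, a < b) :
    κ ≤ #{x | (∀ a ∈ L, a < x) ∧ ∀ b ∈ G, x < b} := by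
  set M := {x | (∀ a ∈ L, a < x) ∧ ∀ b ∈ G, x < b}
  by_contra! hM
  rcases (L ∪ G).eq_empty_or_nonempty with hLG₀ | hne
  · obtain ⟨rfl, rfl⟩ := union_empty_iff.1 hLG₀
    simp [M, hβ.not_gt] at hM
  -- an element strictly between `L` and `G ∪ M` would lie in `M` below itself
  obtain ⟨x, hLx, hxGM⟩ := exists_between_of_small u1 u2
    (hne.mono (union_subset_union_right L subset_union_left)) hL
    (mk_union_le G M |>.trans_lt (add_lt_of_lt hκ hG hM))
    (fun a ha b hb => hb.elim (hLG a ha b) fun hbM => hbM.1 a ha)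
  exact lt_irrefl x (hxGM x (Or.inr ⟨hLx, fun b hb => hxGM b (Or.inl hb)⟩))

end Between

section PartialEmbedding

variable {α β : Type u} [PartialOrder α] [PartialOrder β]

/-- `S.Pairwise GraphCompatible` says that `S` is the graph of a partial injective strictly
monotone map. -/
def GraphCompatible (p q : α × β) : Prop := (p.1 = q.1 ↔ p.2 = q.2) ∧ (p.1 < q.1 → p.2 < q.2)

instance : Std.Refl (GraphCompatible (α := α) (β := β)) :=
  ⟨fun _ => ⟨iff_of_true rfl rfl, fun h => absurd h (lt_irrefl _)⟩⟩

theorem pairwise_insert_graphCompatible {S : Set (α × β)} (hS : S.Pairwise GraphCompatible)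
    {p : α × β} (h : ∀ q ∈ S, GraphCompatible p q ∧ GraphCompatible q p) :
    (insert p S).Pairwise GraphCompatible :=
  pairwise_insert.2 ⟨hS, fun q hq _ => h q hq⟩

variable {κ : Cardinal.{u}} {S : Set (α × β)}

theorem exists_pairwise_insert_fst (hκ : ℵ₀ ≤ κ) (hβ : κ ≤ #β) (u1 : SmallInterpolation κ β)
    (u2 : SmallBoundsAndIncomparable κ β) (hS : S.Pairwise GraphCompatible) (hSκ : #S < κ)
    (a : α) : ∃ b, (insert (a, b) S).Pairwise GraphCompatible := by
  by_cases ha : a ∈ Prod.fst '' S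
  · obtain ⟨q, hq, rfl⟩ := ha
    exact ⟨q.2, by rwa [Prod.mk.eta, insert_eq_of_mem hq]⟩
  set L := Prod.snd '' {q ∈ S | q.1 < a}
  set G := Prod.snd '' {q ∈ S | a < q.1}
  have hLG : ∀ l ∈ L, ∀ g ∈ G, l < g := by
    rintro _ ⟨q, ⟨hq, hqa⟩, rfl⟩ _ ⟨q', ⟨hq', haq'⟩, rfl⟩
    exact (hS.of_refl hq hq').2 (hqa.trans haq')
  have hsmall {T : Set (α × β)} (hT : T ⊆ S) : #(Prod.snd '' T) < κ :=
    mk_image_le.trans_lt ((mk_le_mk_of_subset hT).trans_lt hSκ)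
  have hbig :=
    le_mk_setOf_between hκ hβ u1 u2 (hsmall (sep_subset _ _)) (hsmall (sep_subset _ _)) hLG
  obtain ⟨b, ⟨hLb, hbG⟩, hbS⟩ := not_subset.1 fun h => (hsmall subset_rfl).not_ge
    (hbig.trans (mk_le_mk_of_subset h))
  refine ⟨b, pairwise_insert_graphCompatible hS fun q hq =>
    ⟨⟨?_, fun h => ?_⟩, ⟨?_, fun h => ?_⟩⟩⟩
  · exact iff_of_false (fun h => ha ⟨q, hq, h.symm⟩) fun h => hbS ⟨q, hq, h.symm⟩
  · exact hbG _ ⟨q, ⟨hq, h⟩, rfl⟩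
  · exact iff_of_false (fun h => ha ⟨q, hq, h⟩) fun h => hbS ⟨q, hq, h⟩
  · exact hLb _ ⟨q, ⟨hq, h⟩, rfl⟩

theorem exists_pairwise_insert_snd [Nonempty α] (hκ : ℵ₀ ≤ κ)
    (u2 : SmallBoundsAndIncomparable κ α) (hS : S.Pairwise GraphCompatible) (hSκ : #S < κ)
    (b : β) : ∃ a, (insert (a, b) S).Pairwise GraphCompatible := by
  by_cases hb : b ∈ Prod.snd '' S
  · obtain ⟨q, hq, rfl⟩ := hb
    exact ⟨q.1, by rwa [Prod.mk.eta, insert_eq_of_mem hq]⟩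
  obtain ⟨a₀⟩ := ‹Nonempty α›
  set A := Prod.fst '' S
  have hA := mk_insert_lt hκ ((mk_image_le (f := Prod.fst)).trans_lt hSκ) a₀
  obtain ⟨x, -, -, hx, -, -⟩ := u2 (insert a₀ A) (insert_nonempty _ _) hA
  obtain ⟨-, -, z, -, -, hz⟩ := u2 (insert x (insert a₀ A)) (insert_nonempty _ _)
    (mk_insert_lt hκ hA x)
  -- `z` is incomparable to `x`, which lies below all of `A`
  have hzA : z ∉ A := fun h => (hz x (mem_insert _ _)).2 (hx z (mem_insert_of_mem _ h))
  refine ⟨z, pairwise_insert_graphCompatible hS fun q hq => ?_⟩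
  have hzq := hz q.1 (mem_insert_of_mem _ (mem_insert_of_mem _ ⟨q, hq, rfl⟩))
  exact ⟨⟨iff_of_false (fun h => hzA ⟨q, hq, h.symm⟩) fun h => hb ⟨q, hq, h.symm⟩,
      fun h => absurd h hzq.1⟩,
    ⟨iff_of_false (fun h => hzA ⟨q, hq, h⟩) fun h => hb ⟨q, hq, h⟩, fun h => absurd h hzq.2⟩⟩

theorem exists_bijective_strictMono_of_pairwise (hS : S.Pairwise GraphCompatible)
    (hfst : ∀ a, ∃ b, (a, b) ∈ S) (hsnd : ∀ b, ∃ a, (a, b) ∈ S) :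
    ∃ F : α → β, Function.Bijective F ∧ StrictMono F ∧ ∀ q ∈ S, F q.1 = q.2 := by
  choose F hF using hfst
  have hFS (q) (hq : q ∈ S) : F q.1 = q.2 := (hS.of_refl (hF q.1) hq).1.1 rfl
  refine ⟨F, ⟨fun a a' h => (hS.of_refl (hF a) (hF a')).1.2 h, fun b => ?_⟩,
    fun a a' h => (hS.of_refl (hF a) (hF a')).2 h, hFS⟩
  obtain ⟨a, ha⟩ := hsnd b
  exact ⟨a, hFS _ ha⟩

theorem pairwise_graphCompatible_pair {P : Type u} [PartialOrder P] {p x b : P} (hxp : x < p)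
    (hbx : Incomp b x) (hbp : Incomp b p) :
    ({(p, x), (b, p)} : Set (P × P)).Pairwise GraphCompatible := by
  have hpb : p ≠ b := fun h => hbx.2 (h ▸ hxp)
  refine pairwise_insert_graphCompatible (pairwise_singleton _ _) ?_
  rintro _ rfl
  exact ⟨⟨iff_of_false hpb hxp.ne, fun h => absurd h hbp.2⟩,
    ⟨iff_of_false hpb.symm hxp.ne', fun h => absurd h hbp.1⟩⟩

end PartialEmbedding

theorem exists_pairwise_graphCompatible_superset {P : Type u} [PartialOrder P] [Nonempty P]
    {κ : Cardinal.{u}} (hκ : ℵ₀ ≤ κ) (hP : κ ≤ #P) (u1 : SmallInterpolation κ P)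
    (u2 : SmallBoundsAndIncomparable κ P) {S : Set (P × P)} (hS : S.Pairwise GraphCompatible)
    (hSκ : #S < κ) (c : P) :
    ∃ T, S ⊆ T ∧ T.Pairwise GraphCompatible ∧ #T < κ ∧ (∃ d, (c, d) ∈ T) ∧ ∃ d, (d, c) ∈ T := by
  obtain ⟨d, hd⟩ := exists_pairwise_insert_fst hκ hP u1 u2 hS hSκ c
  have hdκ := mk_insert_lt hκ hSκ (c, d)
  obtain ⟨d', hd'⟩ := exists_pairwise_insert_snd hκ u2 hd hdκ c
  exact ⟨_, (subset_insert _ _).trans (subset_insert _ _), hd', mk_insert_lt hκ hdκ _,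
    ⟨d, mem_insert_of_mem _ (mem_insert _ _)⟩, ⟨d', mem_insert _ _⟩⟩

theorem stmt_8 {P : Type u} [PartialOrder P] (κ : Cardinal.{u})
    (hreg : κ.IsRegular) (hP : #P = κ)
    (u1 : ∀ L G : Set P, L.Nonempty → G.Nonempty → #L < κ → #G < κ →
      (∀ a ∈ L, ∀ b ∈ G, a < b) →
      ∃ x : P, (∀ a ∈ L, a < x) ∧ ∀ b ∈ G, x < b)
    (u2 : ∀ K : Set P, K.Nonempty → #K < κ →
      ∃ x y z : P, (∀ k ∈ K, x < k) ∧ (∀ k ∈ K, k < y) ∧ ∀ k ∈ K, Incomp z k) :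
    ∃ F : P → P, Function.Bijective F ∧ (∀ p q : P, p < q → F p < F q) ∧
      ¬ ∀ p q : P, F p < F q → p < q := by
  have hκ := hreg.aleph0_le
  obtain ⟨p⟩ : Nonempty P := by rw [← mk_ne_zero_iff, hP]; exact hreg.ne_zero
  have : Nonempty P := ⟨p⟩
  have hfin {γ : Type u} {s : Set γ} (hs : s.Finite) : #s < κ := hs.lt_aleph0.trans_le hκ
  obtain ⟨x, -, -, hx, -, -⟩ := u2 {p} (singleton_nonempty p) (hfin (toFinite _))
  have hxp := hx p rfl
  obtain ⟨-, -, b, -, -, hb⟩ := u2 {x, p} (insert_nonempty _ _) (hfin (toFinite _))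
  have hbp := hb p (mem_insert_of_mem _ rfl)
  set S₀ : Set (P × P) := {(p, x), (b, p)}
  have h₀ : S₀.Pairwise GraphCompatible :=
    pairwise_graphCompatible_pair hxp (hb x (mem_insert _ _)) hbp
  obtain ⟨S, hS₀S, hS, hSF⟩ := hreg.exists_pairwise_forall_of_extend hP
    (Q := fun c T => (∃ d, (c, d) ∈ T) ∧ ∃ d, (d, c) ∈ T)
    (fun _ _ _ hTT' h => ⟨h.1.imp fun _ hd => hTT' hd, h.2.imp fun _ hd => hTT' hd⟩)
    (fun _ hS hSκ => exists_pairwise_graphCompatible_superset hκ hP.ge u1 u2 hS hSκ) h₀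
    (hfin (toFinite S₀))
  obtain ⟨F, hF, hFmono, hFS⟩ :=
    exists_bijective_strictMono_of_pairwise hS (fun c => (hSF c).1) (fun c => (hSF c).2)
  refine ⟨F, hF, fun _ _ h => hFmono h, fun hrefl => hbp.2 (hrefl p b ?_)⟩
  rwa [hFS _ (hS₀S (mem_insert _ _)), hFS _ (hS₀S (mem_insert_of_mem _ rfl))]
end

section
/- Let X and Y be relational structures. If there exists a back-and-forth system Π of partial condensations from X to Y, then every R-positive infinitary sentence true in X is true in Y (X ≦_{P∞ω} Y). -/
open Cardinal

universe u v

variable {L : RelLang}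

/-- Infinitary `L_{∞ω}`-formulas over the relational language `L`, with
variables indexed by `ℕ`, set-indexed conjunctions and disjunctions,
negation, and finite quantification. -/
inductive InfForm (L : RelLang) : Type 1
  | eq : ℕ → ℕ → InfForm L
  | rel : (i : L.I) → (Fin (L.arity i) → ℕ) → InfForm L
  | not : InfForm L → InfForm L
  | iAnd : (ι : Type) → (ι → InfForm L) → InfForm L
  | iOr : (ι : Type) → (ι → InfForm L) → InfForm L
  | all : ℕ → InfForm L → InfForm L
  | ex : ℕ → InfForm L → InfForm L

/-- Satisfaction of an infinitary formula in `A` under the valuation `v`. -/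
def InfForm.Sat {X : Type u} (A : RelStr L X) : (ℕ → X) → InfForm L → Prop
  | v, .eq a b => v a = v b
  | v, .rel i t => (fun k => v (t k)) ∈ A.rel i
  | v, .not φ => ¬ InfForm.Sat A v φ
  | v, .iAnd _ f => ∀ j, InfForm.Sat A v (f j)
  | v, .iOr _ f => ∃ j, InfForm.Sat A v (f j)
  | v, .all m φ => ∀ a : X, InfForm.Sat A (Function.update v m a) φ
  | v, .ex m φ => ∃ a : X, InfForm.Sat A (Function.update v m a) φ

/-- The free variables of an infinitary formula. -/
def InfForm.fv : InfForm L → Set ℕ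
  | .eq a b => {a, b}
  | .rel _ t => Set.range t
  | .not φ => φ.fv
  | .iAnd _ f => ⋃ j, (f j).fv
  | .iOr _ f => ⋃ j, (f j).fv
  | .all m φ => φ.fv \ {m}
  | .ex m φ => φ.fv \ {m}

/-- A sentence: an infinitary formula without free variables. -/
def InfForm.IsSentence (φ : InfForm L) : Prop := φ.fv = ∅

/-- The `R`-positive infinitary formulas: built from atomic formulas and
negated equalities (no negated relation symbols) by arbitrary conjunctions
and disjunctions and finite quantification. -/
inductive InfForm.Pos : InfForm L → Prop
  | eq (a b : ℕ) : InfForm.Pos (.eq a b)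
  | neq (a b : ℕ) : InfForm.Pos (.not (.eq a b))
  | rel (i : L.I) (t : Fin (L.arity i) → ℕ) : InfForm.Pos (.rel i t)
  | iAnd (ι : Type) (f : ι → InfForm L) :
      (∀ j, InfForm.Pos (f j)) → InfForm.Pos (.iAnd ι f)
  | iOr (ι : Type) (f : ι → InfForm L) :
      (∀ j, InfForm.Pos (f j)) → InfForm.Pos (.iOr ι f)
  | all (m : ℕ) (φ : InfForm L) : InfForm.Pos φ → InfForm.Pos (.all m φ)
  | ex (m : ℕ) (φ : InfForm L) : InfForm.Pos φ → InfForm.Pos (.ex m φ)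

/-- The `R`-negative infinitary formulas: built from negated atomic relational
formulas, equalities and negated equalities, by arbitrary conjunctions and
disjunctions and finite quantification. -/
inductive InfForm.Neg : InfForm L → Prop
  | eq (a b : ℕ) : InfForm.Neg (.eq a b)
  | neq (a b : ℕ) : InfForm.Neg (.not (.eq a b))
  | nrel (i : L.I) (t : Fin (L.arity i) → ℕ) : InfForm.Neg (.not (.rel i t))
  | iAnd (ι : Type) (f : ι → InfForm L) :
      (∀ j, InfForm.Neg (f j)) → InfForm.Neg (.iAnd ι f)
  | iOr (ι : Type) (f : ι → InfForm L) :
      (∀ j, InfForm.Neg (f j)) → InfForm.Neg (.iOr ι f)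
  | all (m : ℕ) (φ : InfForm L) : InfForm.Neg φ → InfForm.Neg (.all m φ)
  | ex (m : ℕ) (φ : InfForm L) : InfForm.Neg φ → InfForm.Neg (.ex m φ)

/-!
Induction on `R`-positive formulas shows that a pair of valuations which, on the free variables,
lies in the graph of some member of the system transfers satisfaction from `X` to `Y`. Atomic
formulas transfer because each map is a partial function preserving relations, negated equalities
because it is injective; `∃` uses the forth property to find a witness in `Y`, and `∀` uses the back
property to pull each element of `Y` back to `X`. A sentence has no free variables, so any pair of
valuations qualifies.
-/

open Function

section Transfer

variable {X : Type u} {Y : Type v} {A : RelStr L X} {B : RelStr L Y} {S : Set (Set (X × Y))}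

theorem update_mem_of_mem_diff {f g : Set (X × Y)} {s : Set ℕ} {v : ℕ → X} {w : ℕ → Y} {m : ℕ}
    {a : X} {b : Y} (hvw : ∀ n ∈ s \ {m}, (v n, w n) ∈ f) (hfg : f ⊆ g) (hab : (a, b) ∈ g) :
    ∀ n ∈ s, (update v m a n, update w m b n) ∈ g := by
  intro n hn
  by_cases hnm : n = m
  · subst hnm
    simpa using hab
  · simpa only [update_of_ne hnm] using hfg (hvw n ⟨hn, hnm⟩)

theorem InfForm.Pos.sat_transfer (hpc : ∀ f ∈ S, IsPCond A B f)
    (hforth : ∀ f ∈ S, ∀ x : X, ∃ g ∈ S, f ⊆ g ∧ ∃ y : Y, (x, y) ∈ g)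
    (hback : ∀ f ∈ S, ∀ y : Y, ∃ g ∈ S, f ⊆ g ∧ ∃ x : X, (x, y) ∈ g)
    {φ : InfForm L} (hφ : φ.Pos) :
    ∀ f ∈ S, ∀ (v : ℕ → X) (w : ℕ → Y), (∀ n ∈ φ.fv, (v n, w n) ∈ f) →
      InfForm.Sat A v φ → InfForm.Sat B w φ := by
  induction hφ with
  | eq a b =>
    intro f hf v w hvw hsat
    exact (hpc f hf).1 _ (hvw a (by simp [InfForm.fv])) _ (hvw b (by simp [InfForm.fv])) hsat
  | neq a b =>
    intro f hf v w hvw hsat hw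
    exact hsat <|
      (hpc f hf).2.1 _ (hvw a (by simp [InfForm.fv])) _ (hvw b (by simp [InfForm.fv])) hw
  | rel i t =>
    intro f hf v w hvw hsat
    exact (hpc f hf).2.2 i _ _ (fun k => hvw (t k) ⟨k, rfl⟩) hsat
  | iAnd ι g _ ih =>
    intro f hf v w hvw hsat j
    exact ih j f hf v w (fun n hn => hvw n (Set.mem_iUnion_of_mem j hn)) (hsat j)
  | iOr ι g _ ih =>
    intro f hf v w hvw ⟨j, hj⟩
    exact ⟨j, ih j f hf v w (fun n hn => hvw n (Set.mem_iUnion_of_mem j hn)) hj⟩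
  | all m ψ _ ih =>
    intro f hf v w hvw hsat b
    obtain ⟨g, hg, hfg, a, hab⟩ := hback f hf b
    exact ih g hg _ _ (update_mem_of_mem_diff hvw hfg hab) (hsat a)
  | ex m ψ _ ih =>
    intro f hf v w hvw ⟨a, ha⟩
    obtain ⟨g, hg, hfg, b, hab⟩ := hforth f hf a
    exact ⟨b, ih g hg _ _ (update_mem_of_mem_diff hvw hfg hab) ha⟩

end Transfer

theorem stmt_12 {X : Type u} {Y : Type v} (A : RelStr L X) (B : RelStr L Y)
    (S : Set (Set (X × Y))) (hbfs : IsBFS A B S) :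
    ∀ φ : InfForm L, φ.Pos → φ.IsSentence →
      (∀ v : ℕ → X, InfForm.Sat A v φ) → ∀ w : ℕ → Y, InfForm.Sat B w φ := by
  obtain ⟨⟨f, hf⟩, hpc, hforth, hback⟩ := hbfs
  intro φ hφ hsent hsat w
  -- `X` may be empty a priori; the back property yields a point of `X` to build a valuation.
  obtain ⟨-, -, -, x, -⟩ := hback f hf (w 0)
  refine hφ.sat_transfer hpc hforth hback f hf (fun _ => x) w ?_ (hsat _)
  intro n hn
  exact absurd (hsent ▸ hn : n ∈ (∅ : Set ℕ)) (Set.notMem_empty n)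
end

section
/- Let X = ⟨X, ρ⟩ and Y = ⟨Y, σ⟩ be countable equivalence-relation structures in the class C (each has infinitely many singleton classes and classes of arbitrarily large finite size). Then X condenses onto Y (there is a bijective homomorphism X → Y) if and only if either all equivalence classes of X are finite, or Y has an infinite equivalence class. -/
/-- Membership in the class `C`: a countably infinite set with an equivalence
relation having infinitely many singleton classes and, for each `n`, a class
with at least `n` elements. -/
def InClassC {X : Type} (ρ : X → X → Prop) : Prop :=
  Countable X ∧ Infinite X ∧ Equivalence ρ ∧
  {x : X | ∀ y, ρ x y → y = x}.Infinite ∧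
  ∀ n : ℕ, ∃ x : X, ∃ s : Finset X, n ≤ s.card ∧ ∀ y ∈ s, ρ x y

/-- `X` condenses onto `Y`: there is a bijective homomorphism. -/
def Condenses {X Y : Type} (ρ : X → X → Prop) (σ : Y → Y → Prop) : Prop :=
  ∃ f : X → Y, Function.Bijective f ∧ ∀ a b : X, ρ a b → σ (f a) (f b)

/-- All equivalence classes are finite. -/
def AllClassesFinite {X : Type} (ρ : X → X → Prop) : Prop :=
  ∀ x : X, {y : X | ρ x y}.Finite

/-!
Forward direction: a condensation maps each class of `X` injectively into a class of `Y`, so if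
all classes of `Y` are finite, so are those of `X`.

Backward direction: it suffices to find an injective homomorphism `g : X → Y`. Restricted to the
non-singleton points of `X`, it lands in the non-singleton points of `Y`, so infinitely many
singletons of `Y` are missed, and a bijection between these and the (infinitely many) singletons
of `X` completes `g` to a condensation. If `Y` has an infinite class, `g` embeds all of `X` into
it. If all classes are finite, number the classes of `X` injectively by codes at least their
sizes, pick classes of `Y` of strictly increasing sizes, and send the class with code `k`
injectively into the `k`-th of them.
-/

open Set Function

def singletonPoints {X : Type} (ρ : X → X → Prop) : Set X := {x | ∀ y, ρ x y → y = x}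

section
variable {X Y : Type}

theorem exists_bijective_eqOn_compl [Countable X] [Countable Y] {s : Set X} {g : X → Y}
    (hs : s.Infinite) (hg : InjOn g sᶜ) (ht : (g '' sᶜ)ᶜ.Infinite) :
    ∃ f : X → Y, Bijective f ∧ EqOn f g sᶜ := by
  classical
  have : Infinite s := hs.to_subtype
  have : Infinite ↥(g '' sᶜ)ᶜ := ht.to_subtype
  obtain ⟨e⟩ := nonempty_equiv_of_countable (α := s) (β := ↥(g '' sᶜ)ᶜ)
  let F : X ≃ Y := (Equiv.Set.sumCompl s).symm.trans <|
    (Equiv.sumCongr e (Equiv.Set.imageOfInjOn g sᶜ hg)).trans <|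
    (Equiv.sumComm _ _).trans (Equiv.Set.sumCompl (g '' sᶜ))
  refine ⟨F, F.bijective, fun x hx => ?_⟩
  simp [F, Equiv.Set.sumCompl_symm_apply_of_notMem hx, Equiv.Set.imageOfInjOn]

theorem exists_strictMono_comp (f : Y → ℕ) (hf : ∀ n, ∃ y, n ≤ f y) :
    ∃ c : ℕ → Y, StrictMono (f ∘ c) := by
  choose d hd using hf
  exact ⟨fun n => Nat.rec (d 0) (fun _ y => d (f y + 1)) n,
    strictMono_nat_of_lt_succ fun n => hd _⟩

theorem exists_injective_le [Countable X] (s : X → ℕ) :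
    ∃ code : X → ℕ, Injective code ∧ ∀ x, s x ≤ code x := by
  obtain ⟨idx, hidx⟩ := Countable.exists_injective_nat X
  exact ⟨fun x => Nat.pair (idx x) (s x),
    fun a b h => hidx (Nat.pair_eq_pair.1 h).1, fun x => Nat.right_le_pair _ _⟩

variable {ρ : X → X → Prop} {σ : Y → Y → Prop}

theorem setOf_rel_eq_of_rel (hσ : Equivalence σ) {a b : Y} (h : σ a b) :
    {y | σ a y} = {y | σ b y} :=
  Set.ext fun _ => ⟨hσ.trans (hσ.symm h), hσ.trans h⟩

theorem Condenses.allClassesFinite (h : Condenses ρ σ) (hσ : AllClassesFinite σ) :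
    AllClassesFinite ρ := by
  obtain ⟨f, hf, hhom⟩ := h
  exact fun x => ((hσ (f x)).subset (image_subset_iff.2 fun y => hhom x y)).of_finite_image
    hf.1.injOn

theorem condenses_of_injOn_compl_singletonPoints [Countable X] [Countable Y]
    (hρ : Equivalence ρ) (hσ : Equivalence σ) (hX : (singletonPoints ρ).Infinite)
    (hY : (singletonPoints σ).Infinite) {g : X → Y} (hg : InjOn g (singletonPoints ρ)ᶜ)
    (hhom : ∀ a b, ρ a b → σ (g a) (g b)) : Condenses ρ σ := by
  have hmaps : MapsTo g (singletonPoints ρ)ᶜ (singletonPoints σ)ᶜ := by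
    intro x hx hgx
    obtain ⟨y, hxy, hyx⟩ : ∃ y, ρ x y ∧ y ≠ x := by simpa [singletonPoints] using hx
    have hy : y ∉ singletonPoints ρ := fun hy => hyx (hy x (hρ.symm hxy)).symm
    exact hyx (hg hy hx (hgx _ (hhom x y hxy)))
  obtain ⟨f, hf, hfg⟩ := exists_bijective_eqOn_compl hX hg
    (hY.mono fun y hy ⟨x, hx, hxy⟩ => hmaps hx (hxy ▸ hy))
  refine ⟨f, hf, fun a b hab => ?_⟩
  by_cases ha : a ∈ singletonPoints ρ
  · rw [ha b hab]
    exact hσ.refl _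
  · have hb : b ∉ singletonPoints ρ := fun hb => ha (hb a (hρ.symm hab) ▸ hb)
    rw [hfg ha, hfg hb]
    exact hhom a b hab

theorem exists_injective_forall_rel_of_infinite [Countable X] (hσ : Equivalence σ) {y₀ : Y}
    (hy₀ : {y | σ y₀ y}.Infinite) : ∃ g : X → Y, Injective g ∧ ∀ a b, σ (g a) (g b) := by
  obtain ⟨ι, hι⟩ := Countable.exists_injective_nat X
  let e := hy₀.natEmbedding
  refine ⟨fun x => e (ι x), fun a b h => hι (e.injective (Subtype.ext h)), fun a b => ?_⟩
  exact hσ.trans (hσ.symm (e (ι a)).2) (e (ι b)).2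

theorem exists_le_ncard_of_exists_finset
    (hσ : ∀ n : ℕ, ∃ y : Y, ∃ s : Finset Y, n ≤ s.card ∧ ∀ y' ∈ s, σ y y')
    (hfin : AllClassesFinite σ) (n : ℕ) : ∃ y, n ≤ {y' | σ y y'}.ncard := by
  obtain ⟨y, s, hn, hs⟩ := hσ n
  exact ⟨y, hn.trans (ncard_coe_finset s ▸ ncard_le_ncard hs (hfin y))⟩

theorem exists_injective_hom_of_allClassesFinite [Countable X] (hρ : Equivalence ρ)
    (hσ : Equivalence σ) (hρfin : AllClassesFinite ρ) (hσfin : AllClassesFinite σ)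
    (hσbig : ∀ n, ∃ y, n ≤ {y' | σ y y'}.ncard) :
    ∃ g : X → Y, Injective g ∧ ∀ a b, ρ a b → σ (g a) (g b) := by
  have : Nonempty Y := let ⟨y, _⟩ := hσbig 0; ⟨y⟩
  let r : Setoid X := ⟨ρ, hρ⟩
  let fiber (q : Quotient r) : Set X := Quotient.mk r ⁻¹' {q}
  obtain ⟨c, hc⟩ := exists_strictMono_comp (fun y => {y' | σ y y'}.ncard) hσbig
  obtain ⟨code, hcode, hle⟩ := exists_injective_le fun q => (fiber q).ncard
  have hemb (q : Quotient r) : ∃ φ : X → Y, MapsTo φ (fiber q) {y | σ (c (code q)) y} ∧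
      InjOn φ (fiber q) := by
    induction q using Quotient.inductionOn with | h x => ?_
    have hfin : (fiber ⟦x⟧).Finite :=
      (hρfin x).subset fun y hy => hρ.symm (Quotient.exact hy)
    have hcard : (fiber ⟦x⟧).encard ≤ {y | σ (c (code ⟦x⟧)) y}.encard := by
      rw [← hfin.cast_ncard_eq, ← (hσfin _).cast_ncard_eq, Nat.cast_le]
      exact (hle _).trans (hc.id_le _)
    exact hfin.exists_injOn_of_encard_le hcard
  choose Φ hΦmaps hΦinj using hemb
  refine ⟨fun x => Φ ⟦x⟧ x, fun a b (hab : Φ ⟦a⟧ a = Φ ⟦b⟧ b) => ?_, fun a b hab => ?_⟩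
  · -- the target classes of `⟦a⟧` and `⟦b⟧` meet, so they coincide and have equal sizes
    have hq : (⟦a⟧ : Quotient r) = ⟦b⟧ := by
      have hrel := hσ.trans (hΦmaps ⟦a⟧ rfl) (hσ.symm (hab ▸ hΦmaps ⟦b⟧ rfl))
      exact hcode (hc.injective (congrArg ncard (setOf_rel_eq_of_rel hσ hrel)))
    exact hΦinj ⟦a⟧ rfl hq.symm (by simpa only [hq] using hab)
  · have hq : (⟦a⟧ : Quotient r) = ⟦b⟧ := Quotient.sound hab
    exact hσ.trans (hσ.symm (hΦmaps ⟦a⟧ rfl)) (hq ▸ hΦmaps ⟦b⟧ rfl)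

end

theorem stmt_18 {X Y : Type} (ρ : X → X → Prop) (σ : Y → Y → Prop)
    (hX : InClassC ρ) (hY : InClassC σ) :
    Condenses ρ σ ↔ (AllClassesFinite ρ ∨ ∃ y : Y, {y' : Y | σ y y'}.Infinite) := by
  obtain ⟨_, -, hρ, hρ₁, -⟩ := hX
  obtain ⟨_, -, hσ, hσ₁, hσbig⟩ := hY
  refine ⟨fun h => ?_, fun h => ?_⟩
  · by_contra! hcon
    exact hcon.1 (h.allClassesFinite hcon.2)
  obtain ⟨g, hg, hhom⟩ : ∃ g : X → Y, Injective g ∧ ∀ a b, ρ a b → σ (g a) (g b) := by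
    by_cases hinf : ∃ y : Y, {y' : Y | σ y y'}.Infinite
    · obtain ⟨y, hy⟩ := hinf
      obtain ⟨g, hg, hrel⟩ := exists_injective_forall_rel_of_infinite (X := X) hσ hy
      exact ⟨g, hg, fun a b _ => hrel a b⟩
    · have hσfin : AllClassesFinite σ := by simpa [AllClassesFinite] using hinf
      exact exists_injective_hom_of_allClassesFinite hρ hσ (h.resolve_right hinf) hσfin
        (exists_le_ncard_of_exists_finset hσbig hσfin)
  exact condenses_of_injOn_compl_singletonPoints hρ hσ hρ₁ hσ₁ hg.injOn hhom
end
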